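/- arXiv:2001.05581 — 4 statements merged into one kernel-verified Lean document; each statement's English description precedes it below -/
import Mathlib

section
/- Fix points a, b ∈ ℝ^d and exponent P ≥ 1. The function f : ℝ^d → ℝ defined by f(r) = Σ_{i=1}^d (|a_i - r_i|^P - |b_i - r_i|^P) is the difference of two convex functions, and on any axis-parallel box R = Π_i [Rmin_i, Rmax_i], the supremum of f over R is attained, for each coordinate i, at one of the endpoints Rmin_i or Rmax_i; i.e., sup_{r ∈ R} f(r) = Σ_{i=1}^d max_{r_i ∈ {Rmin_i, Rmax_i}} (|a_i - r_i|^P - |b_i - r_i|^P). -/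
open Set

private lemma rpow_two_point {P : ℝ} (hP : 1 ≤ P) {u v U V : ℝ}
    (hu : 0 ≤ u) (hv : 0 ≤ v) (hU : 0 ≤ U)
    (huV : u ≤ V) (hvV : v ≤ V) (hsum : u + v ≤ U + V) :
    u ^ P + v ^ P ≤ U ^ P + V ^ P := by
  have hP0 : 0 ≤ P := by linarith
  have hV : 0 ≤ V := le_trans hu huV
  rcases le_or_gt u U with h | hUu
  · have h1 := Real.rpow_le_rpow hu h hP0
    have h2 := Real.rpow_le_rpow hv hvV hP0
    linarith
  rcases le_or_gt v U with h | hUv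
  · have h1 := Real.rpow_le_rpow hu huV hP0
    have h2 := Real.rpow_le_rpow hv h hP0
    linarith
  have hUV : U < V := lt_of_lt_of_le hUu huV
  have hd : 0 < V - U := by linarith
  set s := (u - U) / (V - U) with hs
  set t := (v - U) / (V - U) with ht
  have hs0 : 0 ≤ s := div_nonneg (by linarith) hd.le
  have ht0 : 0 ≤ t := div_nonneg (by linarith) hd.le
  have hst : s + t ≤ 1 := by
    rw [hs, ht, ← add_div, div_le_one hd]; linarith
  have hcomb_u : (1 - s) * U + s * V = u := by field_simp [hs]; have := div_mul_cancel₀ (u - U) hd.ne'; rw [← hs] at this; linear_combination this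
  have hcomb_v : (1 - t) * U + t * V = v := by field_simp [ht]; have := div_mul_cancel₀ (v - U) hd.ne'; rw [← ht] at this; linear_combination this
  have C := convexOn_rpow hP
  have h1 : u ^ P ≤ (1 - s) * U ^ P + s * V ^ P := by
    have := C.2 (mem_Ici.2 hU) (mem_Ici.2 hV) (by linarith : (0:ℝ) ≤ 1 - s) hs0
      (by ring : (1 - s) + s = 1)
    simpa [smul_eq_mul, hcomb_u] using this
  have h2 : v ^ P ≤ (1 - t) * U ^ P + t * V ^ P := by
    have := C.2 (mem_Ici.2 hU) (mem_Ici.2 hV) (by linarith : (0:ℝ) ≤ 1 - t) ht0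
      (by ring : (1 - t) + t = 1)
    simpa [smul_eq_mul, hcomb_v] using this
  have hUVp : U ^ P ≤ V ^ P := Real.rpow_le_rpow hU hUV.le hP0
  nlinarith [mul_nonneg (by linarith : (0:ℝ) ≤ 1 - s - t) (sub_nonneg.2 hUVp)]

private lemma mono_aux {P : ℝ} (hP : 1 ≤ P) {a b x y : ℝ} (hab : a ≤ b) (hxy : x ≤ y) :
    |x - a| ^ P - |x - b| ^ P ≤ |y - a| ^ P - |y - b| ^ P := by
  have hsum : |x - a| + |y - b| ≤ |x - b| + |y - a| := by
    rcases abs_cases (x - a) with ⟨h1, h1'⟩ | ⟨h1, h1'⟩ <;>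
    rcases abs_cases (x - b) with ⟨h2, h2'⟩ | ⟨h2, h2'⟩ <;>
    rcases abs_cases (y - a) with ⟨h3, h3'⟩ | ⟨h3, h3'⟩ <;>
    rcases abs_cases (y - b) with ⟨h4, h4'⟩ | ⟨h4, h4'⟩ <;> linarith
  have hu : |x - a| ≤ max (|x - b|) (|y - a|) := by
    rcases le_total x a with h | h
    · exact le_max_of_le_left
        (by rw [abs_of_nonpos (by linarith), abs_of_nonpos (by linarith)]; linarith)
    · refine le_max_of_le_right ?_
      rw [abs_of_nonneg (by linarith)]
      have := le_abs_self (y - a); linarith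
  have hv : |y - b| ≤ max (|x - b|) (|y - a|) := by
    rcases le_total y b with h | h
    · exact le_max_of_le_left
        (by rw [abs_of_nonpos (by linarith), abs_of_nonpos (by linarith)]; linarith)
    · exact le_max_of_le_right
        (by rw [abs_of_nonneg (by linarith), abs_of_nonneg (by linarith)]; linarith)
  have hkey := rpow_two_point hP (abs_nonneg (x - a)) (abs_nonneg (y - b))
    (le_min (abs_nonneg (x - b)) (abs_nonneg (y - a))) hu hv
    (by rw [min_add_max]; exact hsum)
  rcases le_total (|x - b|) (|y - a|) with h | h
  · rw [min_eq_left h, max_eq_right h] at hkey; linarith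
  · rw [min_eq_right h, max_eq_left h] at hkey; linarith

private lemma endpoint_aux {P : ℝ} (hP : 1 ≤ P) (a b lo hi x : ℝ)
    (h1 : lo ≤ x) (h2 : x ≤ hi) :
    |a - x| ^ P - |b - x| ^ P ≤
      max (|a - lo| ^ P - |b - lo| ^ P) (|a - hi| ^ P - |b - hi| ^ P) := by
  rw [abs_sub_comm a x, abs_sub_comm b x, abs_sub_comm a lo, abs_sub_comm b lo,
      abs_sub_comm a hi, abs_sub_comm b hi]
  rcases le_total a b with hab | hab
  · exact le_max_of_le_right (mono_aux hP hab h2)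
  · refine le_max_of_le_left ?_
    have := mono_aux hP hab h1
    linarith

private lemma convexOn_sum_abs_rpow {P : ℝ} (hP : 1 ≤ P) (d : ℕ) (a : Fin d → ℝ) :
    ConvexOn ℝ Set.univ (fun r : Fin d → ℝ => ∑ i, |a i - r i| ^ P) := by
  have hP0 : 0 ≤ P := by linarith
  have h1 : ∀ c : ℝ, ConvexOn ℝ Set.univ (fun x : ℝ => |c - x| ^ P) := by
    intro c
    refine ⟨convex_univ, ?_⟩
    intro x _ y _ s t hs ht hst
    simp only [smul_eq_mul]
    have habs : |c - (s * x + t * y)| ≤ s * |c - x| + t * |c - y| := by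
      have heq : c - (s * x + t * y) = s * (c - x) + t * (c - y) := by
        linear_combination (-c) * hst
      calc |c - (s * x + t * y)| = |s * (c - x) + t * (c - y)| := by rw [heq]
        _ ≤ |s * (c - x)| + |t * (c - y)| := abs_add_le _ _
        _ = s * |c - x| + t * |c - y| := by
            rw [abs_mul, abs_mul, abs_of_nonneg hs, abs_of_nonneg ht]
    have hr1 : |c - (s * x + t * y)| ^ P ≤ (s * |c - x| + t * |c - y|) ^ P :=
      Real.rpow_le_rpow (abs_nonneg _) habs hP0
    have hr2 := (convexOn_rpow hP).2 (mem_Ici.2 (abs_nonneg (c - x)))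
      (mem_Ici.2 (abs_nonneg (c - y))) hs ht hst
    simp only [smul_eq_mul] at hr2
    linarith
  have hcoord : ∀ i : Fin d, ConvexOn ℝ Set.univ (fun r : Fin d → ℝ => |a i - r i| ^ P) := by
    intro i
    refine ⟨convex_univ, ?_⟩
    intro x _ y _ s t hs ht hst
    have := (h1 (a i)).2 (Set.mem_univ (x i)) (Set.mem_univ (y i)) hs ht hst
    simpa using this
  have hgen : ∀ s : Finset (Fin d),
      ConvexOn ℝ Set.univ (fun r : Fin d → ℝ => ∑ i ∈ s, |a i - r i| ^ P) := by
    intro s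
    induction s using Finset.induction with
    | empty => simpa using convexOn_const (0 : ℝ) convex_univ
    | @insert j s hj ih =>
        have := (hcoord j).add ih
        simp only [Finset.sum_insert hj]; exact this
  exact hgen Finset.univ

theorem sSup_sum_diff_pow_over_box (d : ℕ) (a b Rmin Rmax : Fin d → ℝ)
    (hR : ∀ i, Rmin i ≤ Rmax i) (P : ℝ) (hP : 1 ≤ P) :
    (∃ g₁ g₂ : (Fin d → ℝ) → ℝ, ConvexOn ℝ Set.univ g₁ ∧ ConvexOn ℝ Set.univ g₂ ∧
        ∀ r, (∑ i, (|a i - r i| ^ P - |b i - r i| ^ P)) = g₁ r - g₂ r) ∧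
    sSup ((fun r : Fin d → ℝ => ∑ i, (|a i - r i| ^ P - |b i - r i| ^ P)) ''
        Set.univ.pi (fun i => Set.Icc (Rmin i) (Rmax i))) =
      ∑ i, max (|a i - Rmin i| ^ P - |b i - Rmin i| ^ P)
        (|a i - Rmax i| ^ P - |b i - Rmax i| ^ P) := by
  constructor
  · exact ⟨fun r => ∑ i, |a i - r i| ^ P, fun r => ∑ i, |b i - r i| ^ P,
      convexOn_sum_abs_rpow hP d a, convexOn_sum_abs_rpow hP d b,
      fun r => Finset.sum_sub_distrib _ _⟩
  · apply IsGreatest.csSup_eq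
    constructor
    · refine ⟨fun i => if (|a i - Rmax i| ^ P - |b i - Rmax i| ^ P) ≤
          (|a i - Rmin i| ^ P - |b i - Rmin i| ^ P) then Rmin i else Rmax i, ?_, ?_⟩
      · intro i _
        dsimp only
        split_ifs
        · exact ⟨le_rfl, hR i⟩
        · exact ⟨hR i, le_rfl⟩
      · refine Finset.sum_congr rfl fun i _ => ?_
        dsimp only
        split_ifs with h
        · exact (max_eq_left h).symm
        · exact (max_eq_right (le_of_not_ge h)).symm
    · rintro y ⟨r, hr, rfl⟩
      exact Finset.sum_le_sum fun i _ =>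
        endpoint_aux hP (a i) (b i) (Rmin i) (Rmax i) (r i)
          (hr i trivial).1 (hr i trivial).2
end

section
/- Let g : ℝ → ℝ be given by g(t) = |α - t|^P - |β - t|^P for fixed α, β ∈ ℝ and real P ≥ 1. Then for any closed interval [u, v], the maximum of g over [u, v] is attained at u or at v, i.e., sup_{t ∈ [u,v]} g(t) = max(g(u), g(v)). -/
/-!
Since `φ = |·| ^ P` is convex, its increments `φ (s + c) - φ s` over a fixed step `c ≥ 0` grow
with `s`. Writing `|α - t| ^ P - |β - t| ^ P` as such an increment in `s = min α β - t` (up to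
sign) shows that it is monotone in `t`, so its supremum over `[u, v]` is attained at an endpoint.
-/

open Set

lemma convexOn_abs_rpow {p : ℝ} (hp : 1 ≤ p) : ConvexOn ℝ univ fun x : ℝ => |x| ^ p := by
  have himg : (|·|) '' univ = Ici (0 : ℝ) := by
    rw [image_univ]; exact range_norm ℝ
  refine ConvexOn.comp (g := (· ^ p)) ?_ convexOn_univ_norm ?_
  · exact himg ▸ convexOn_rpow hp
  · exact himg ▸ Real.monotoneOn_rpow_Ici_of_exponent_nonneg (by linarith)

section
variable {𝕜 : Type*} [Field 𝕜] [LinearOrder 𝕜] [IsStrictOrderedRing 𝕜] {f : 𝕜 → 𝕜}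

lemma ConvexOn.monotone_add_const_sub (hf : ConvexOn 𝕜 univ f) {c : 𝕜} (hc : 0 ≤ c) :
    Monotone fun x => f (x + c) - f x := by
  intro a b hab
  rcases hab.eq_or_lt with rfl | hab
  · rfl
  -- `a + c` and `b` are the convex combinations of `a` and `b + c` with swapped weights.
  have hd : 0 < b + c - a := by linarith
  set l := c / (b + c - a)
  have hl₀ : 0 ≤ l := by positivity
  have hl₁ : 0 ≤ 1 - l := by
    rw [sub_nonneg, div_le_one hd]; linarith
  have hld : l * (b + c - a) = c := div_mul_cancel₀ _ hd.ne'
  have left := hf.2 (mem_univ a) (mem_univ (b + c)) hl₁ hl₀ (by ring)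
  have right := hf.2 (mem_univ a) (mem_univ (b + c)) hl₀ hl₁ (by ring)
  rw [smul_eq_mul, smul_eq_mul, show (1 - l) * a + l * (b + c) = a + c by linear_combination hld]
    at left
  rw [smul_eq_mul, smul_eq_mul, show l * a + (1 - l) * (b + c) = b by linear_combination -hld]
    at right
  simp only [smul_eq_mul] at left right
  linarith

lemma ConvexOn.antitone_map_sub_sub_map_sub (hf : ConvexOn 𝕜 univ f) {α β : 𝕜} (h : β ≤ α) :
    Antitone fun t => f (α - t) - f (β - t) := by
  intro s t hst
  have := hf.monotone_add_const_sub (sub_nonneg.2 h) (sub_le_sub_left hst β)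
  simpa only [sub_add_sub_cancel'] using this

end

lemma csSup_image_Icc_of_monotone_or_antitone {α β : Type*} [Preorder α]
    [ConditionallyCompleteLinearOrder β] {f : α → β} (hf : Monotone f ∨ Antitone f) {u v : α}
    (huv : u ≤ v) : sSup (f '' Icc u v) = max (f u) (f v) := by
  rcases hf with hf | hf
  · rw [(hf.map_isGreatest (isGreatest_Icc huv)).csSup_eq, max_eq_right (hf huv)]
  · rw [(hf.map_isLeast (isLeast_Icc huv)).csSup_eq, max_eq_left (hf huv)]

theorem sSup_diff_abs_pow_Icc (α β P u v : ℝ) (hP : 1 ≤ P) (huv : u ≤ v) :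
    sSup ((fun t => |α - t| ^ P - |β - t| ^ P) '' Set.Icc u v) =
      max (|α - u| ^ P - |β - u| ^ P) (|α - v| ^ P - |β - v| ^ P) := by
  have hconv := convexOn_abs_rpow hP
  refine csSup_image_Icc_of_monotone_or_antitone ?_ huv
  rcases le_total β α with h | h
  · exact .inr (hconv.antitone_map_sub_sub_map_sub h)
  · exact .inl (by simpa only [neg_sub] using (hconv.antitone_map_sub_sub_map_sub h).neg)
end

section
/- Let A, B, R ⊆ ℝ^d be nonempty axis-parallel boxes and P ≥ 1. Then A dominates B w.r.t. R under the L_P distance (i.e., for all r ∈ R, a ∈ A, b ∈ B: ‖a - r‖_P < ‖b - r‖_P) if and only if Σ_{i=1}^d max_{r_i ∈ {Rmin_i, Rmax_i}} ( MaxDist(A_i, r_i)^P - MinDist(B_i, r_i)^P ) < 0, where A_i, B_i denote the i-th coordinate intervals, MaxDist(X, x) = max(|x - Xmin|, |x - Xmax|) and MinDist(X, x) is the distance from x to the interval X. -/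
/-!
For fixed `a`, `b` and `P ≥ 1` the map `x ↦ |a - x| ^ P - |b - x| ^ P` is monotone (a two-point
majorization inequality for the convex function `|·| ^ P`), so on an interval it is maximised at an
endpoint. Taking the supremum over `a ∈ A_i`, `b ∈ B_i` turns it into
`MaxDist1(A_i, x) ^ P - MinDist1(B_i, x) ^ P`, which therefore also attains its maximum over
`R_i` at `Rmin_i` or `Rmax_i`. Since the coordinates of `r`, `a`, `b` can be chosen independently,
the largest value of `‖a - r‖_P ^ P - ‖b - r‖_P ^ P` over the boxes is the sum in the criterion.
-/

noncomputable def MinDist1 (lo hi x : ℝ) : ℝ :=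
  if x < lo then lo - x else if hi < x then x - hi else 0

noncomputable def MaxDist1 (lo hi x : ℝ) : ℝ := max |x - lo| |x - hi|

open Set

theorem ConvexOn.map_add_map_le_map_add_map {𝕜 : Type*} [Field 𝕜] [LinearOrder 𝕜]
    [IsStrictOrderedRing 𝕜] {s : Set 𝕜} {f : 𝕜 → 𝕜} (hf : ConvexOn 𝕜 s f) {u v w z : 𝕜} (hu : u ∈ s) (hz : z ∈ s) (hv : v ∈ Icc u z) (hsum : v + w = u + z) :
    f v + f w ≤ f u + f z := by
  rcases hv.1.eq_or_lt with rfl | huv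
  · rw [show w = z by linarith]
  have huz : 0 < z - u := by linarith [hv.2]
  have hv' : (z - v) / (z - u) * u + (v - u) / (z - u) * z = v := by field_simp; ring
  have hw' : (v - u) / (z - u) * u + (z - v) / (z - u) * z = w := by
    field_simp
    linear_combination (u - z) * hsum
  have hab : (z - v) / (z - u) + (v - u) / (z - u) = 1 := by field_simp; ring
  have hzv : 0 ≤ (z - v) / (z - u) := div_nonneg (by linarith [hv.2]) huz.le
  have hvu : 0 ≤ (v - u) / (z - u) := div_nonneg (by linarith) huz.le
  have h₁ := hf.2 hu hz hzv hvu hab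
  have h₂ := hf.2 hu hz hvu hzv (by rw [add_comm, hab])
  simp only [smul_eq_mul, hv', hw'] at h₁ h₂
  linear_combination h₁ + h₂ + (f u + f z) * hab

theorem convexOn_abs_rpow_s6 {P : ℝ} (hP : 1 ≤ P) : ConvexOn ℝ univ fun t : ℝ => |t| ^ P := by
  have himage : abs '' univ = Ici (0 : ℝ) := by
    ext t
    exact ⟨fun ⟨s, _, hs⟩ => hs ▸ abs_nonneg s, fun ht => ⟨t, trivial, abs_of_nonneg ht⟩⟩
  refine ConvexOn.comp (g := fun t : ℝ => t ^ P) ?_ convexOn_univ_norm ?_ <;>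
    simp only [himage]
  · exact convexOn_rpow hP
  · exact fun x hx y _ hxy => Real.rpow_le_rpow hx hxy (by linarith)

theorem monotone_abs_sub_rpow_sub {P : ℝ} (hP : 1 ≤ P) {a b : ℝ} (hab : a ≤ b) :
    Monotone fun x => |a - x| ^ P - |b - x| ^ P := by
  intro x y hxy
  have := (convexOn_abs_rpow_s6 hP).map_add_map_le_map_add_map (u := a - y) (v := a - x)
    (w := b - y) (z := b - x) trivial trivial ⟨by linarith, by linarith⟩ (by ring)
  dsimp only
  linarith

theorem abs_sub_rpow_sub_le_max {P : ℝ} (hP : 1 ≤ P) (a b : ℝ) {u v x : ℝ} (hx : x ∈ Icc u v) :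
    |a - x| ^ P - |b - x| ^ P ≤ max (|a - u| ^ P - |b - u| ^ P) (|a - v| ^ P - |b - v| ^ P) := by
  rcases le_total a b with hab | hba
  · exact (monotone_abs_sub_rpow_sub hP hab hx.2).trans (le_max_right _ _)
  · have := monotone_abs_sub_rpow_sub hP hba hx.1
    exact le_max_of_le_left (by dsimp only at this; linarith)

theorem isGreatest_maxDist1 {lo hi : ℝ} (h : lo ≤ hi) (x : ℝ) :
    IsGreatest ((fun a => |a - x|) '' Icc lo hi) (MaxDist1 lo hi x) := by
  refine ⟨?_, ?_⟩
  · rcases le_total |x - hi| |x - lo| with hc | hc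
    · exact ⟨lo, ⟨le_rfl, h⟩, by simp only [MaxDist1, abs_sub_comm lo x, max_eq_left hc]⟩
    · exact ⟨hi, ⟨h, le_rfl⟩, by simp only [MaxDist1, abs_sub_comm hi x, max_eq_right hc]⟩
  · rintro _ ⟨a, ⟨hlo, hhi⟩, rfl⟩
    show |a - x| ≤ max |x - lo| |x - hi|
    rw [le_max_iff, abs_sub_comm a]
    rcases le_total x a with hxa | hax
    · exact Or.inr (by rw [abs_of_nonpos (by linarith), abs_of_nonpos (by linarith)]; linarith)
    · exact Or.inl (by rw [abs_of_nonneg (by linarith), abs_of_nonneg (by linarith)]; linarith)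

theorem isLeast_minDist1 {lo hi : ℝ} (h : lo ≤ hi) (x : ℝ) :
    IsLeast ((fun b => |b - x|) '' Icc lo hi) (MinDist1 lo hi x) := by
  refine ⟨?_, ?_⟩
  · unfold MinDist1
    split_ifs with hlo hhi
    · exact ⟨lo, ⟨le_rfl, h⟩, abs_of_pos (by linarith)⟩
    · exact ⟨hi, ⟨h, le_rfl⟩, by dsimp only; rw [abs_of_neg (by linarith)]; ring⟩
    · exact ⟨x, ⟨not_lt.1 hlo, not_lt.1 hhi⟩, by simp⟩
  · rintro _ ⟨b, ⟨hlo, hhi⟩, rfl⟩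
    unfold MinDist1
    split_ifs <;> linarith [le_abs_self (b - x), neg_abs_le (b - x), abs_nonneg (b - x)]

theorem minDist1_nonneg (lo hi x : ℝ) : 0 ≤ MinDist1 lo hi x := by
  unfold MinDist1
  split_ifs <;> linarith

noncomputable def distGap (alo ahi blo bhi P x : ℝ) : ℝ :=
  MaxDist1 alo ahi x ^ P - MinDist1 blo bhi x ^ P

theorem abs_sub_rpow_sub_le_max_distGap {P : ℝ} (hP : 1 ≤ P)
    {alo ahi blo bhi rlo rhi a b r : ℝ} (ha : a ∈ Icc alo ahi) (hb : b ∈ Icc blo bhi)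
    (hr : r ∈ Icc rlo rhi) :
    |a - r| ^ P - |b - r| ^ P ≤
      max (distGap alo ahi blo bhi P rlo) (distGap alo ahi blo bhi P rhi) := by
  have hP0 : 0 ≤ P := by linarith
  have hgap (x : ℝ) : |a - x| ^ P - |b - x| ^ P ≤ distGap alo ahi blo bhi P x := by
    have hax := (isGreatest_maxDist1 (ha.1.trans ha.2) x).2 ⟨a, ha, rfl⟩
    have hbx := (isLeast_minDist1 (hb.1.trans hb.2) x).2 ⟨b, hb, rfl⟩
    have := Real.rpow_le_rpow (abs_nonneg _) hax hP0
    have := Real.rpow_le_rpow (minDist1_nonneg _ _ _) hbx hP0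
    unfold distGap
    linarith
  exact (abs_sub_rpow_sub_le_max hP a b hr).trans (max_le_max (hgap rlo) (hgap rhi))

theorem exists_abs_sub_rpow_sub_eq_max_distGap (P : ℝ) {alo ahi blo bhi rlo rhi : ℝ}
    (hA : alo ≤ ahi) (hB : blo ≤ bhi) (hR : rlo ≤ rhi) :
    ∃ r ∈ Icc rlo rhi, ∃ a ∈ Icc alo ahi, ∃ b ∈ Icc blo bhi,
      |a - r| ^ P - |b - r| ^ P =
        max (distGap alo ahi blo bhi P rlo) (distGap alo ahi blo bhi P rhi) := by
  obtain ⟨r, hr, hmax⟩ : ∃ r ∈ Icc rlo rhi,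
      distGap alo ahi blo bhi P r =
        max (distGap alo ahi blo bhi P rlo) (distGap alo ahi blo bhi P rhi) := by
    rcases le_total (distGap alo ahi blo bhi P rlo) (distGap alo ahi blo bhi P rhi) with h | h
    · exact ⟨rhi, ⟨hR, le_rfl⟩, (max_eq_right h).symm⟩
    · exact ⟨rlo, ⟨le_rfl, hR⟩, (max_eq_left h).symm⟩
  obtain ⟨a, ha, hra⟩ := (isGreatest_maxDist1 hA r).1
  obtain ⟨b, hb, hrb⟩ := (isLeast_minDist1 hB r).1
  exact ⟨r, hr, a, ha, b, hb, by rw [← hmax, distGap, ← hra, ← hrb]⟩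

theorem domination_criterion (d : ℕ) (Amin Amax Bmin Bmax Rmin Rmax : Fin d → ℝ)
    (hA : ∀ i, Amin i ≤ Amax i) (hB : ∀ i, Bmin i ≤ Bmax i)
    (hR : ∀ i, Rmin i ≤ Rmax i) (P : ℝ) (hP : 1 ≤ P) :
    (∀ r ∈ Set.univ.pi (fun i => Set.Icc (Rmin i) (Rmax i)),
      ∀ a ∈ Set.univ.pi (fun i => Set.Icc (Amin i) (Amax i)),
      ∀ b ∈ Set.univ.pi (fun i => Set.Icc (Bmin i) (Bmax i)),
        (∑ i, |a i - r i| ^ P) ^ (1 / P) < (∑ i, |b i - r i| ^ P) ^ (1 / P)) ↔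
    (∑ i, max (MaxDist1 (Amin i) (Amax i) (Rmin i) ^ P - MinDist1 (Bmin i) (Bmax i) (Rmin i) ^ P)
        (MaxDist1 (Amin i) (Amax i) (Rmax i) ^ P - MinDist1 (Bmin i) (Bmax i) (Rmax i) ^ P)) < 0 := by
  have hnorm_lt (r a b : Fin d → ℝ) :
      (∑ i, |a i - r i| ^ P) ^ (1 / P) < (∑ i, |b i - r i| ^ P) ^ (1 / P) ↔
        ∑ i, (|a i - r i| ^ P - |b i - r i| ^ P) < 0 := by
    rw [Real.rpow_lt_rpow_iff (by positivity) (by positivity) (one_div_pos.2 (by linarith)),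
      Finset.sum_sub_distrib, sub_neg]
  simp only [hnorm_lt]
  constructor
  · intro H
    choose r hr a ha b hb hgap using fun i =>
      exists_abs_sub_rpow_sub_eq_max_distGap P (hA i) (hB i) (hR i)
    have := H r (fun i _ => hr i) a (fun i _ => ha i) b (fun i _ => hb i)
    rwa [Finset.sum_congr rfl fun i _ => hgap i] at this
  · intro H r hr a ha b hb
    exact (Finset.sum_le_sum fun i _ => abs_sub_rpow_sub_le_max_distGap hP
      (ha i (mem_univ i)) (hb i (mem_univ i)) (hr i (mem_univ i))).trans_lt H
end

section
/- (Corner-based criterion for convex regions) Let a, b ∈ ℝ^d be points and R ⊆ ℝ^d a compact axis-parallel box with corner set C(R) = Π_i {Rmin_i, Rmax_i}. Then a dominates b w.r.t. R under Euclidean distance (∀ r ∈ R: ‖a - r‖ < ‖b - r‖) if and only if for every corner c ∈ C(R): ‖a - c‖ < ‖b - c‖. -/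
/-!
For fixed `a` and `b`, the dominance condition `‖a - r‖ < ‖b - r‖` is equivalent to
`2 ⟪b - a, r⟫ < ‖b‖² - ‖a‖²`, a strict inequality on a linear functional of `r`. Over a box a
linear functional is maximised at a corner, found coordinatewise by taking the upper end of
the `i`-th interval where `(b - a) i ≥ 0` and the lower end otherwise.
-/

open scoped RealInnerProductSpace

theorem norm_sub_lt_norm_sub_iff_two_mul_inner_lt {E : Type*} [NormedAddCommGroup E]
    [InnerProductSpace ℝ E] (a b r : E) :
    ‖a - r‖ < ‖b - r‖ ↔ 2 * ⟪b - a, r⟫ < ‖b‖ ^ 2 - ‖a‖ ^ 2 := by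
  rw [← sq_lt_sq₀ (norm_nonneg _) (norm_nonneg _), norm_sub_sq_real, norm_sub_sq_real,
    inner_sub_left]
  constructor <;> intro h <;> linarith

theorem mul_le_mul_ite_of_mem_Icc {v r lo hi : ℝ} (hr : r ∈ Set.Icc lo hi) :
    v * r ≤ v * if 0 ≤ v then hi else lo := by
  split_ifs with hv
  · exact mul_le_mul_of_nonneg_left hr.2 hv
  · exact mul_le_mul_of_nonpos_left hr.1 (le_of_not_ge hv)

theorem EuclideanSpace.exists_corner_inner_le {ι : Type*} [Fintype ι] (v r : EuclideanSpace ℝ ι)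
    {lo hi : ι → ℝ} (hr : ∀ i, r i ∈ Set.Icc (lo i) (hi i)) :
    ∃ c : EuclideanSpace ℝ ι, (∀ i, c i = lo i ∨ c i = hi i) ∧ ⟪v, r⟫ ≤ ⟪v, c⟫ := by
  refine ⟨WithLp.toLp 2 fun i => if 0 ≤ v i then hi i else lo i, fun i => ?_, ?_⟩
  · by_cases hv : 0 ≤ v i <;> simp [hv]
  · simp only [PiLp.inner_apply, Real.inner_apply]
    exact Finset.sum_le_sum fun i _ => mul_le_mul_ite_of_mem_Icc (hr i)

theorem corner_criterion (d : ℕ) (a b : EuclideanSpace ℝ (Fin d)) (Rmin Rmax : Fin d → ℝ)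
    (hR : ∀ i, Rmin i ≤ Rmax i) :
    (∀ r : EuclideanSpace ℝ (Fin d), (∀ i, r i ∈ Set.Icc (Rmin i) (Rmax i)) →
        ‖a - r‖ < ‖b - r‖) ↔
      (∀ c : EuclideanSpace ℝ (Fin d), (∀ i, c i = Rmin i ∨ c i = Rmax i) →
        ‖a - c‖ < ‖b - c‖) := by
  refine ⟨fun h c hc => h c fun i => ?_, fun h r hr => ?_⟩
  · rcases hc i with hci | hci <;> simp [hci, hR i]
  · obtain ⟨c, hc, hrc⟩ := EuclideanSpace.exists_corner_inner_le (b - a) r hr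
    have hdom := (norm_sub_lt_norm_sub_iff_two_mul_inner_lt a b c).1 (h c hc)
    exact (norm_sub_lt_norm_sub_iff_two_mul_inner_lt a b r).2 (by linarith)
end
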